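/- Let E and F be nonzero finite-dimensional complex inner product spaces, let a : E → F be linear with adjoint a†, let b : F → F be linear and invertible, and let ν : F → F be linear with ‖ν‖ ≤ (1/2)‖b⁻¹‖⁻¹ (so b − ν is invertible). Set κ = ‖a‖²‖b⁻¹‖², let N := a†b⁻¹a and N₀ := a†(b − ν)⁻¹a, and assume both N and N₀ are self-adjoint and that there is μ > 0 with re⟨v, N v⟩ ≤ −μ‖v‖² and re⟨v, N₀ v⟩ ≤ −μ‖v‖² for all v ∈ E, and that 8κ‖ν‖ ≤ μ. Then for every t ≥ 0, ‖exp(t N) − exp(t N₀)‖ ≤ 32 · e^{−μt/2} · μ⁻¹ κ ‖ν‖. -/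

import Mathlib

/-!
By the second resolvent identity `b⁻¹ - (b - ν)⁻¹ = -b⁻¹ ν (b - ν)⁻¹`, and `‖(b - ν)⁻¹‖ ≤ 2‖b⁻¹‖`,
the generators differ by `‖N - N₀‖ ≤ 2κ‖ν‖`. The quadratic-form bound makes `e^{2μs}‖exp(sN) v‖²`
nonincreasing, so both semigroups decay like `e^{-μs}`. Duhamel's formula then gives
`‖exp(tN) - exp(tN₀)‖ ≤ t e^{-μt} ‖N - N₀‖`, and `t e^{-μt/2} ≤ 2/μ` absorbs the factor `t`.
-/

open NormedSpace ContinuousLinearMap RCLike Set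

section Decay

variable {𝕜 E : Type*} [RCLike 𝕜] [NormedAddCommGroup E] [InnerProductSpace 𝕜 E]
  [NormedSpace ℝ E]

theorem antitone_exp_mul_norm_sq_of_hasDerivAt {N : E →L[𝕜] E} {μ : ℝ}
    (hN : ∀ v, re (inner 𝕜 v (N v)) ≤ -μ * ‖v‖ ^ 2) {f : ℝ → E}
    (hf : ∀ u, HasDerivAt f (N (f u)) u) :
    Antitone fun u => Real.exp (2 * μ * u) * ‖f u‖ ^ 2 := by
  have hnorm : ∀ u, HasDerivAt (fun w => ‖f w‖ ^ 2) (2 * re (inner 𝕜 (f u) (N (f u)))) u := by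
    intro u
    have h := (reCLM (K := 𝕜)).hasFDerivAt.comp_hasDerivAt u ((hf u).inner 𝕜 (hf u))
    simp only [Function.comp_def, reCLM_apply, inner_self_eq_norm_sq, map_add] at h
    refine h.congr_deriv ?_
    rw [← inner_conj_symm (N (f u)), conj_re]; ring
  refine antitone_of_hasDerivAt_nonpos
    (fun u => (((hasDerivAt_id u).const_mul (2 * μ)).exp).mul (hnorm u)) fun u => ?_
  have hquad := hN (f u)
  have hexp : 0 < Real.exp (2 * μ * u) := Real.exp_pos _
  simp only [id, mul_one, Pi.zero_apply]
  nlinarith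

end Decay

theorem norm_exp_smul_le_of_re_inner_le {E : Type*} [NormedAddCommGroup E]
    [InnerProductSpace ℂ E] [CompleteSpace E] {N : E →L[ℂ] E} {μ : ℝ}
    (hN : ∀ v, (inner ℂ v (N v)).re ≤ -μ * ‖v‖ ^ 2) {s : ℝ} (hs : 0 ≤ s) :
    ‖exp (s • N)‖ ≤ Real.exp (-μ * s) := by
  refine opNorm_le_bound _ (Real.exp_nonneg _) fun v => ?_
  have hf : ∀ u : ℝ, HasDerivAt (fun w : ℝ => exp (w • N) v) (N (exp (u • N) v)) u := fun u =>
    ((apply ℂ E v).restrictScalars ℝ).hasFDerivAt.comp_hasDerivAt u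
      (hasDerivAt_exp_smul_const' N u)
  have h := antitone_exp_mul_norm_sq_of_hasDerivAt hN hf hs
  simp only [mul_zero, Real.exp_zero, zero_smul, exp_zero, one_mul] at h
  have hsq : (Real.exp (μ * s) * ‖exp (s • N) v‖) ^ 2 ≤ ‖v‖ ^ 2 := by
    rwa [mul_pow, ← Real.exp_nat_mul, Nat.cast_ofNat, ← mul_assoc]
  rw [neg_mul, Real.exp_neg, inv_mul_eq_div, le_div_iff₀ (Real.exp_pos _), mul_comm]
  exact (pow_le_pow_iff_left₀ (by positivity) (norm_nonneg v) two_ne_zero).mp hsq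

section Duhamel

variable {𝔸 : Type*} [NormedRing 𝔸] [NormedAlgebra ℝ 𝔸] [CompleteSpace 𝔸]

theorem hasDerivAt_exp_smul_mul_exp_smul (A B : 𝔸) (t s : ℝ) :
    HasDerivAt (fun s : ℝ => exp ((t - s) • A) * exp (s • B))
      (exp ((t - s) • A) * ((B - A) * exp (s • B))) s := by
  have hA : HasDerivAt (fun s : ℝ => exp ((t - s) • A)) (-(A * exp ((t - s) • A))) s := by
    simpa [Function.comp_def] using
      (hasDerivAt_exp_smul_const' A (t - s)).scomp s ((hasDerivAt_id s).const_sub t)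
  refine (hA.mul (hasDerivAt_exp_smul_const' B s)).congr_deriv ?_
  rw [((Commute.refl A).smul_right (t - s)).exp_right.eq, sub_mul, mul_sub, neg_mul, mul_assoc]
  abel

theorem norm_exp_smul_sub_exp_smul_le (A B : 𝔸) {t M : ℝ} (ht : 0 ≤ t)
    (hM : ∀ s ∈ Icc 0 t, ‖exp ((t - s) • A)‖ * ‖exp (s • B)‖ ≤ M) :
    ‖exp (t • A) - exp (t • B)‖ ≤ M * ‖A - B‖ * t := by
  -- mean value inequality for `s ↦ exp ((t - s) • A) * exp (s • B)` on `[0, t]`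
  have hbound : ∀ s ∈ Icc 0 t, ‖exp ((t - s) • A) * ((B - A) * exp (s • B))‖ ≤ M * ‖A - B‖ :=
    fun s hs => calc
      _ ≤ ‖exp ((t - s) • A)‖ * (‖B - A‖ * ‖exp (s • B)‖) :=
        (norm_mul_le _ _).trans (by gcongr; exact norm_mul_le _ _)
      _ = ‖exp ((t - s) • A)‖ * ‖exp (s • B)‖ * ‖A - B‖ := by rw [norm_sub_rev]; ring
      _ ≤ M * ‖A - B‖ := by gcongr; exact hM s hs
  have h := (convex_Icc 0 t).norm_image_sub_le_of_norm_hasDerivWithin_le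
    (fun s _ => (hasDerivAt_exp_smul_mul_exp_smul A B t s).hasDerivWithinAt) hbound
    (left_mem_Icc.mpr ht) (right_mem_Icc.mpr ht)
  simpa [norm_sub_rev, abs_of_nonneg ht] using h

end Duhamel

theorem norm_inverse_sub_inverse_sub_le {R : Type*} [NormedRing R] {b ν : R} (hb : IsUnit b)
    (hbν : IsUnit (b - ν)) (hν : ‖ν‖ ≤ (1 / 2) * ‖Ring.inverse b‖⁻¹) :
    ‖Ring.inverse b - Ring.inverse (b - ν)‖ ≤ 2 * ‖Ring.inverse b‖ ^ 2 * ‖ν‖ := by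
  set B := Ring.inverse b
  set C := Ring.inverse (b - ν)
  have hdiff : B - C = -(B * ν * C) := by
    rw [Ring.inverse_sub_inverse (iff_of_true hb hbν), sub_sub_cancel_left, mul_neg, neg_mul]
  have hνB : ‖B‖ * ‖ν‖ ≤ 1 / 2 := by
    rcases (norm_nonneg B).eq_or_lt with hB | hB
    · rw [← hB]; norm_num
    · rwa [mul_comm, ← le_div_iff₀ hB, div_eq_mul_inv]
  have hBνC : ‖B * ν * C‖ ≤ ‖B‖ * ‖ν‖ * ‖C‖ :=
    (norm_mul_le _ _).trans (by gcongr; exact norm_mul_le _ _)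
  have hC : ‖C‖ ≤ 2 * ‖B‖ := by
    have hrec : ‖C‖ ≤ ‖B‖ + ‖B‖ * ‖ν‖ * ‖C‖ := by
      calc ‖C‖ = ‖B + B * ν * C‖ := by rw [← sub_neg_eq_add, ← hdiff, sub_sub_cancel]
        _ ≤ _ := (norm_add_le _ _).trans (by gcongr)
    nlinarith [norm_nonneg C]
  calc ‖B - C‖ ≤ ‖B‖ * ‖ν‖ * ‖C‖ := by rwa [hdiff, norm_neg]
    _ ≤ ‖B‖ * ‖ν‖ * (2 * ‖B‖) := by gcongr
    _ = 2 * ‖B‖ ^ 2 * ‖ν‖ := by ring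

theorem norm_adjoint_comp_comp_le {𝕜 E F : Type*} [RCLike 𝕜] [NormedAddCommGroup E]
    [InnerProductSpace 𝕜 E] [CompleteSpace E] [NormedAddCommGroup F] [InnerProductSpace 𝕜 F]
    [CompleteSpace F] (a : E →L[𝕜] F) (X : F →L[𝕜] F) :
    ‖(adjoint a).comp (X.comp a)‖ ≤ ‖a‖ ^ 2 * ‖X‖ :=
  calc _ ≤ ‖adjoint a‖ * (‖X‖ * ‖a‖) :=
        (opNorm_comp_le _ _).trans (by gcongr; exact opNorm_comp_le _ _)
    _ = ‖a‖ ^ 2 * ‖X‖ := by rw [adjoint.norm_map]; ring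

theorem mul_exp_neg_mul_le {μ : ℝ} (hμ : 0 < μ) (t : ℝ) :
    t * Real.exp (-μ * t) ≤ 2 / μ * Real.exp (-μ * t / 2) := by
  have hsplit : Real.exp (-μ * t) = (Real.exp (μ * t / 2))⁻¹ * Real.exp (-μ * t / 2) := by
    rw [← Real.exp_neg, ← Real.exp_add]; ring_nf
  have hlin : μ * t / 2 ≤ Real.exp (μ * t / 2) := by linarith [Real.add_one_le_exp (μ * t / 2)]
  rw [hsplit, ← mul_assoc]
  gcongr
  rw [← div_eq_mul_inv, div_le_div_iff₀ (Real.exp_pos _) hμ]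
  linarith

theorem kinetic_networks_evolution_difference_bound_general
    (E F : Type*) [NormedAddCommGroup E] [InnerProductSpace ℂ E]
    [FiniteDimensional ℂ E]
    [NormedAddCommGroup F] [InnerProductSpace ℂ F]
    [FiniteDimensional ℂ F]
    (a : E →L[ℂ] F) (b ν : F →L[ℂ] F) (hb : IsUnit b)
    (hν : ‖ν‖ ≤ (1 / 2) * ‖Ring.inverse b‖⁻¹)
    (hbν : IsUnit (b - ν))
    (κ : ℝ) (hκ : κ = ‖a‖ ^ 2 * ‖Ring.inverse b‖ ^ 2)
    (N N₀ : E →L[ℂ] E)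
    (hN : N = (ContinuousLinearMap.adjoint a).comp ((Ring.inverse b).comp a))
    (hN₀ : N₀ = (ContinuousLinearMap.adjoint a).comp ((Ring.inverse (b - ν)).comp a))
    (μ : ℝ) (hμ : 0 < μ)
    (hNneg : ∀ v : E, (inner ℂ v (N v) : ℂ).re ≤ -μ * ‖v‖ ^ 2)
    (hN₀neg : ∀ v : E, (inner ℂ v (N₀ v) : ℂ).re ≤ -μ * ‖v‖ ^ 2)
    (t : ℝ) (ht : 0 ≤ t) :
    ‖NormedSpace.exp (t • N) - NormedSpace.exp (t • N₀)‖ ≤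
      32 * Real.exp (-μ * t / 2) * μ⁻¹ * κ * ‖ν‖ := by
  have hκ₀ : 0 ≤ κ := hκ ▸ by positivity
  have hdiff : ‖N - N₀‖ ≤ 2 * κ * ‖ν‖ := by
    rw [hN, hN₀, ← comp_sub, ← sub_comp]
    calc _ ≤ ‖a‖ ^ 2 * ‖Ring.inverse b - Ring.inverse (b - ν)‖ := norm_adjoint_comp_comp_le _ _
      _ ≤ ‖a‖ ^ 2 * (2 * ‖Ring.inverse b‖ ^ 2 * ‖ν‖) := by
        gcongr; exact norm_inverse_sub_inverse_sub_le hb hbν hν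
      _ = 2 * κ * ‖ν‖ := by rw [hκ]; ring
  have hevol : ‖exp (t • N) - exp (t • N₀)‖ ≤ Real.exp (-μ * t) * ‖N - N₀‖ * t := by
    refine norm_exp_smul_sub_exp_smul_le N N₀ ht fun s ⟨hs₀, hst⟩ => ?_
    calc _ ≤ Real.exp (-μ * (t - s)) * Real.exp (-μ * s) := by
          gcongr
          exacts [norm_exp_smul_le_of_re_inner_le hNneg (sub_nonneg.mpr hst),
            norm_exp_smul_le_of_re_inner_le hN₀neg hs₀]
      _ = Real.exp (-μ * t) := by rw [← Real.exp_add]; ring_nf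
  calc _ ≤ Real.exp (-μ * t) * (2 * κ * ‖ν‖) * t := hevol.trans (by gcongr)
    _ = 2 * κ * ‖ν‖ * (t * Real.exp (-μ * t)) := by ring
    _ ≤ 2 * κ * ‖ν‖ * (2 / μ * Real.exp (-μ * t / 2)) :=
        mul_le_mul_of_nonneg_left (mul_exp_neg_mul_le hμ t) (by positivity)
    _ ≤ 32 * Real.exp (-μ * t / 2) * μ⁻¹ * κ * ‖ν‖ := by
      rw [div_eq_mul_inv]
      have : 0 ≤ Real.exp (-μ * t / 2) * μ⁻¹ * κ * ‖ν‖ := by positivity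
      linarith

/-- **Evolution difference between the kinetic networks `N` and `N₀`.**
With `b = b₀ + ν`, `N = a†b⁻¹a` and `N₀ = a†(b−ν)⁻¹a`, both self-adjoint and bounded above
by `−μ` on the quadratic form, and `8κ‖ν‖ ≤ μ` where `κ = ‖a‖²‖b⁻¹‖²`, then for all `t ≥ 0`,
`‖exp(t N) − exp(t N₀)‖ ≤ 32·e^{−μt/2}·μ⁻¹κ‖ν‖`. -/
theorem kinetic_networks_evolution_difference_bound
    (E F : Type*) [NormedAddCommGroup E] [InnerProductSpace ℂ E]
    [FiniteDimensional ℂ E] [Nontrivial E]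
    [NormedAddCommGroup F] [InnerProductSpace ℂ F]
    [FiniteDimensional ℂ F] [Nontrivial F]
    (a : E →L[ℂ] F) (b ν : F →L[ℂ] F) (hb : IsUnit b)
    (hν : ‖ν‖ ≤ (1 / 2) * ‖Ring.inverse b‖⁻¹)
    (hbν : IsUnit (b - ν))
    (κ : ℝ) (hκ : κ = ‖a‖ ^ 2 * ‖Ring.inverse b‖ ^ 2)
    (N N₀ : E →L[ℂ] E)
    (hN : N = (ContinuousLinearMap.adjoint a).comp ((Ring.inverse b).comp a))
    (hN₀ : N₀ = (ContinuousLinearMap.adjoint a).comp ((Ring.inverse (b - ν)).comp a))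
    (hNsa : IsSelfAdjoint N) (hN₀sa : IsSelfAdjoint N₀)
    (μ : ℝ) (hμ : 0 < μ)
    (hNneg : ∀ v : E, (inner ℂ v (N v) : ℂ).re ≤ -μ * ‖v‖ ^ 2)
    (hN₀neg : ∀ v : E, (inner ℂ v (N₀ v) : ℂ).re ≤ -μ * ‖v‖ ^ 2)
    (hκν : 8 * κ * ‖ν‖ ≤ μ)
    (t : ℝ) (ht : 0 ≤ t) :
    ‖NormedSpace.exp (t • N) - NormedSpace.exp (t • N₀)‖ ≤
      32 * Real.exp (-μ * t / 2) * μ⁻¹ * κ * ‖ν‖ :=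
  kinetic_networks_evolution_difference_bound_general E F a b ν hb hν hbν κ hκ N N₀ hN hN₀ μ hμ
    hNneg hN₀neg t ht
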